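/- If ν has finite second moment m₂ = ∫_0^∞ l² ν(dl) < ∞, then for every z ≥ 0, lim_{t→(1/m)⁻} (1−mt)^{−1} κ^{(t)}((1−mt)² z) = (m/m₂)(√(1 + 2(m₂/m) z) − 1). -/

import Mathlib

/-!
Write `-Ψ^(t)(ρ) = (1 - mt) ρ + t F(ρ)` with `F(ρ) = ∫ (e^{-ρl} - 1 + ρl) ν(dl) ≥ 0`. Squeezing
`e^{-x} - 1 + x` between `x²/2 · e^{-x}` and `x²/2` and using dominated convergence gives
`F(ρ)/ρ² → m₂/2` as `ρ → 0+`. With `ε = 1 - mt` and `ρ = κ^(t)(ε² z) ≤ ε z`, the rescaled value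
`u = ρ/ε` solves the quadratic `c u² + u = z` with `c = t F(ρ)/ρ² → m₂/(2m)`, so
`u = 2z / (1 + √(1 + 4cz))` converges to the positive root of the limiting quadratic.
-/

open MeasureTheory Filter Topology

/-- The Laplace exponent `Ψ^(t)(ρ) = -ρ + t ∫_0^∞ (1 - e^{-ρ l}) ν(dl)`. -/
noncomputable def Psi (ν : Measure ℝ) (t ρ : ℝ) : ℝ :=
  -ρ + t * ∫ l, (1 - Real.exp (-(ρ * l))) ∂ν

lemma apply_zero_le_of_hasDerivAt_nonneg {f f' : ℝ → ℝ} (hf : ∀ x, HasDerivAt f (f' x) x)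
    (hf' : ∀ x, 0 ≤ x → 0 ≤ f' x) {x : ℝ} (hx : 0 ≤ x) : f 0 ≤ f x := by
  have hmono : MonotoneOn f (Set.Ici 0) :=
    monotoneOn_of_deriv_nonneg (convex_Ici 0)
      (fun y _ => (hf y).continuousAt.continuousWithinAt)
      (fun y _ => (hf y).differentiableAt.differentiableWithinAt)
      (fun y hy => (hf y).deriv ▸ hf' y (by simp_all [le_of_lt]))
  exact hmono Set.self_mem_Ici hx hx

namespace Real

lemma exp_neg_sub_one_add_nonneg (x : ℝ) : 0 ≤ exp (-x) - 1 + x := by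
  linarith [add_one_le_exp (-x)]

lemma exp_neg_sub_one_add_le_self {x : ℝ} (hx : 0 ≤ x) : exp (-x) - 1 + x ≤ x := by
  linarith [exp_le_one_iff.2 (neg_nonpos.2 hx)]

lemma exp_neg_sub_one_add_le_sq_div_two {x : ℝ} (hx : 0 ≤ x) :
    exp (-x) - 1 + x ≤ x ^ 2 / 2 := by
  have hderiv (y : ℝ) : HasDerivAt (fun x => x ^ 2 / 2 - (exp (-x) - 1 + x))
      (y + exp (-y) - 1) y :=
    (((hasDerivAt_pow 2 y).div_const 2).sub
      ((((hasDerivAt_neg y).exp).sub_const 1).add (hasDerivAt_id' y))).congr_deriv (by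
        push_cast; ring)
  simpa using apply_zero_le_of_hasDerivAt_nonneg hderiv
    (fun y _ => by linarith [add_one_le_exp (-y)]) hx

lemma sq_div_two_mul_exp_neg_le {x : ℝ} (hx : 0 ≤ x) :
    x ^ 2 / 2 * exp (-x) ≤ exp (-x) - 1 + x := by
  -- multiplied by `exp x`, this is `x ^ 2 / 2 ≤ 1 - exp x + x * exp x`
  have hderiv (y : ℝ) : HasDerivAt (fun x => 1 - exp x + x * exp x - x ^ 2 / 2)
      (y * (exp y - 1)) y :=
    ((((hasDerivAt_exp y).const_sub 1).add ((hasDerivAt_id' y).mul (hasDerivAt_exp y))).sub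
      ((hasDerivAt_pow 2 y).div_const 2)).congr_deriv (by push_cast; ring)
  have key := apply_zero_le_of_hasDerivAt_nonneg hderiv
    (fun y hy => mul_nonneg hy (by linarith [add_one_le_exp y])) hx
  simp only [exp_zero] at key
  have hinv : exp (-x) * exp x = 1 := by rw [← exp_add]; simp
  nlinarith [exp_pos (-x)]

end Real

lemma eq_two_mul_div_one_add_sqrt_of_mul_sq_add_eq {c u z : ℝ} (hc : 0 ≤ c) (hu : 0 ≤ u)
    (h : c * u ^ 2 + u = z) : u = 2 * z / (1 + Real.sqrt (1 + 4 * c * z)) := by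
  have hs : Real.sqrt (1 + 4 * c * z) = 2 * c * u + 1 := by
    rw [show 1 + 4 * c * z = (2 * c * u + 1) ^ 2 by rw [← h]; ring]
    exact Real.sqrt_sq (by positivity)
  rw [hs, eq_div_iff (by positivity), ← h]
  ring

lemma inv_mul_sqrt_sub_one_eq {a z : ℝ} (ha : 0 < a) (hz : 0 ≤ z) :
    a⁻¹ * (Real.sqrt (1 + 2 * a * z) - 1) = 2 * z / (1 + Real.sqrt (1 + 2 * a * z)) := by
  have hs := Real.sq_sqrt (show 0 ≤ 1 + 2 * a * z by positivity)
  rw [eq_div_iff (by positivity)]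
  generalize Real.sqrt (1 + 2 * a * z) = s at hs ⊢
  field_simp
  linear_combination hs

noncomputable def laplaceRemainder (ν : Measure ℝ) (ρ : ℝ) : ℝ :=
  ∫ l, (Real.exp (-(ρ * l)) - 1 + ρ * l) ∂ν

section LaplaceRemainder

variable {ν : Measure ℝ}

@[simp]
lemma laplaceRemainder_zero : laplaceRemainder ν 0 = 0 := by
  simp [laplaceRemainder]

lemma laplaceRemainder_nonneg (ρ : ℝ) : 0 ≤ laplaceRemainder ν ρ :=
  integral_nonneg fun l => Real.exp_neg_sub_one_add_nonneg (ρ * l)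

lemma integrable_exp_neg_mul_sub_one_add (hν : ∀ᵐ l ∂ν, 0 ≤ l)
    (hint : Integrable (fun l : ℝ => l) ν) {ρ : ℝ} (hρ : 0 ≤ ρ) :
    Integrable (fun l => Real.exp (-(ρ * l)) - 1 + ρ * l) ν := by
  refine (hint.const_mul ρ).mono' (by fun_prop) ?_
  filter_upwards [hν] with l hl
  rw [Real.norm_of_nonneg (Real.exp_neg_sub_one_add_nonneg _)]
  exact Real.exp_neg_sub_one_add_le_self (mul_nonneg hρ hl)

lemma neg_Psi_eq (hν : ∀ᵐ l ∂ν, 0 ≤ l) (hint : Integrable (fun l : ℝ => l) ν) (t : ℝ) {ρ : ℝ}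
    (hρ : 0 ≤ ρ) :
    -Psi ν t ρ = (1 - (∫ l, l ∂ν) * t) * ρ + t * laplaceRemainder ν ρ := by
  have hsplit :
      ∫ l, (1 - Real.exp (-(ρ * l))) ∂ν = ρ * ∫ l, l ∂ν - laplaceRemainder ν ρ := by
    rw [laplaceRemainder, ← integral_const_mul, ← integral_sub (hint.const_mul ρ)
      (integrable_exp_neg_mul_sub_one_add hν hint hρ)]
    congr 1 with l
    ring
  rw [Psi, hsplit]
  ring

lemma laplaceRemainder_le (hν : ∀ᵐ l ∂ν, 0 ≤ l) (hint2 : Integrable (fun l : ℝ => l ^ 2) ν)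
    {ρ : ℝ} (hρ : 0 ≤ ρ) : laplaceRemainder ν ρ ≤ ρ ^ 2 / 2 * ∫ l, l ^ 2 ∂ν := by
  rw [laplaceRemainder, ← integral_const_mul]
  refine integral_mono_of_nonneg (.of_forall fun l => Real.exp_neg_sub_one_add_nonneg _)
    (hint2.const_mul _) ?_
  filter_upwards [hν] with l hl
  linarith [Real.exp_neg_sub_one_add_le_sq_div_two (mul_nonneg hρ hl)]

lemma le_laplaceRemainder (hν : ∀ᵐ l ∂ν, 0 ≤ l) (hint : Integrable (fun l : ℝ => l) ν)
    {ρ : ℝ} (hρ : 0 ≤ ρ) :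
    ρ ^ 2 / 2 * ∫ l, l ^ 2 * Real.exp (-(ρ * l)) ∂ν ≤ laplaceRemainder ν ρ := by
  rw [laplaceRemainder, ← integral_const_mul]
  refine integral_mono_of_nonneg (.of_forall fun l => by positivity)
    (integrable_exp_neg_mul_sub_one_add hν hint hρ) ?_
  filter_upwards [hν] with l hl
  linarith [Real.sq_div_two_mul_exp_neg_le (mul_nonneg hρ hl)]

lemma tendsto_integral_sq_mul_exp_neg (hν : ∀ᵐ l ∂ν, 0 ≤ l)
    (hint2 : Integrable (fun l : ℝ => l ^ 2) ν) :
    Tendsto (fun ρ => ∫ l, l ^ 2 * Real.exp (-(ρ * l)) ∂ν) (𝓝[>] 0)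
      (𝓝 (∫ l, l ^ 2 ∂ν)) := by
  refine tendsto_integral_filter_of_dominated_convergence _ (.of_forall fun ρ => by fun_prop)
    ?_ hint2 (.of_forall fun l => ?_)
  · filter_upwards [self_mem_nhdsWithin] with ρ (hρ : 0 < ρ)
    filter_upwards [hν] with l hl
    rw [Real.norm_of_nonneg (by positivity)]
    exact mul_le_of_le_one_right (sq_nonneg l)
      (Real.exp_le_one_iff.2 (neg_nonpos.2 (mul_nonneg hρ.le hl)))
  · have hcont : Continuous fun ρ : ℝ => l ^ 2 * Real.exp (-(ρ * l)) := by fun_prop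
    simpa using (hcont.tendsto 0).mono_left nhdsWithin_le_nhds

lemma tendsto_laplaceRemainder_div_sq (hν : ∀ᵐ l ∂ν, 0 ≤ l)
    (hint : Integrable (fun l : ℝ => l) ν) (hint2 : Integrable (fun l : ℝ => l ^ 2) ν) :
    Tendsto (fun ρ => laplaceRemainder ν ρ / ρ ^ 2) (𝓝[>] 0)
      (𝓝 ((∫ l, l ^ 2 ∂ν) / 2)) := by
  refine tendsto_of_tendsto_of_tendsto_of_le_of_le'
    ((tendsto_integral_sq_mul_exp_neg hν hint2).div_const 2) tendsto_const_nhds ?_ ?_ <;>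
  filter_upwards [self_mem_nhdsWithin] with ρ (hρ : 0 < ρ)
  · rw [le_div_iff₀ (by positivity)]
    linarith [le_laplaceRemainder hν hint hρ.le]
  · rw [div_le_iff₀ (by positivity)]
    linarith [laplaceRemainder_le hν hint2 hρ.le]

end LaplaceRemainder

lemma integral_sq_pos {ν : Measure ℝ} (hint2 : Integrable (fun l : ℝ => l ^ 2) ν)
    (hm : ∫ l, l ∂ν ≠ 0) : 0 < ∫ l, l ^ 2 ∂ν := by
  refine (integral_nonneg fun l => sq_nonneg l).lt_of_ne fun h => hm ?_
  have hzero := (integral_eq_zero_iff_of_nonneg (fun l => sq_nonneg l) hint2).1 h.symm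
  exact integral_eq_zero_of_ae (hzero.mono fun l hl => pow_eq_zero_iff two_ne_zero |>.1 hl)

lemma tendsto_inv_mul_of_mul_add_eq_sq_mul {α : Type*} {l : Filter α} {F : ℝ → ℝ}
    {q T z : ℝ} (hF0 : F 0 = 0) (hF : ∀ ρ, 0 ≤ ρ → 0 ≤ F ρ)
    (hFq : Tendsto (fun ρ => F ρ / ρ ^ 2) (𝓝[>] 0) (𝓝 q)) {ε t ρ : α → ℝ}
    (hε : Tendsto ε l (𝓝[>] 0)) (ht : Tendsto t l (𝓝 T)) (ht0 : ∀ᶠ a in l, 0 ≤ t a)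
    (hρ : ∀ᶠ a in l, 0 ≤ ρ a ∧ ε a * ρ a + t a * F (ρ a) = ε a ^ 2 * z) (hz : 0 ≤ z) :
    Tendsto (fun a => (ε a)⁻¹ * ρ a) l
      (𝓝 (2 * z / (1 + Real.sqrt (1 + 4 * (T * q) * z)))) := by
  have hεpos : ∀ᶠ a in l, 0 < ε a := hε self_mem_nhdsWithin
  have hρle : ∀ᶠ a in l, ρ a ≤ ε a * z := by
    filter_upwards [hεpos, ht0, hρ] with a hεa hta ⟨hρa, heq⟩
    refine le_of_mul_le_mul_left ?_ hεa
    nlinarith [mul_nonneg hta (hF _ hρa)]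
  rcases hz.eq_or_lt with rfl | hz
  · simp only [mul_zero, zero_div]
    refine tendsto_const_nhds.congr' ?_
    filter_upwards [hρ, hρle] with a ⟨hρa, _⟩ hle
    simp [le_antisymm (by simpa using hle) hρa]
  have hρpos : ∀ᶠ a in l, 0 < ρ a := by
    filter_upwards [hεpos, hρ] with a hεa ⟨hρa, heq⟩
    refine hρa.lt_of_ne' fun h => ?_
    rw [h, hF0] at heq
    nlinarith [pow_pos hεa 2]
  have hρ0 : Tendsto ρ l (𝓝[>] 0) :=
    tendsto_nhdsWithin_iff.2 ⟨tendsto_of_tendsto_of_tendsto_of_le_of_le' tendsto_const_nhds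
      (by simpa using (tendsto_nhds_of_tendsto_nhdsWithin hε).mul_const z)
      (hρ.mono fun _ h => h.1) hρle, hρpos⟩
  have hroot : Continuous fun c => 2 * z / (1 + Real.sqrt (1 + 4 * c * z)) :=
    continuous_const.div (by fun_prop) fun c => by positivity
  refine ((hroot.tendsto _).comp (ht.mul (hFq.comp hρ0))).congr' ?_
  filter_upwards [hεpos, ht0, hρ, hρpos] with a hεa hta ⟨_, heq⟩ hρa
  -- `u = ρ / ε` solves `c u ^ 2 + u = z` with `c = t F(ρ) / ρ ^ 2`
  refine (eq_two_mul_div_one_add_sqrt_of_mul_sq_add_eq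
    (mul_nonneg hta (div_nonneg (hF _ hρa.le) (sq_nonneg _))) (by positivity) ?_).symm
  field_simp
  linear_combination heq

lemma tendsto_one_sub_mul_nhdsLT {m : ℝ} (hm : 0 < m) :
    Tendsto (fun t => 1 - m * t) (𝓝[<] (1 / m)) (𝓝[>] 0) := by
  refine tendsto_nhdsWithin_iff.2 ⟨?_, ?_⟩
  · have hcont : Continuous fun t : ℝ => 1 - m * t := by fun_prop
    simpa [hm.ne'] using (hcont.tendsto (1 / m)).mono_left nhdsWithin_le_nhds
  · filter_upwards [self_mem_nhdsWithin] with t (ht : t < 1 / m)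
    rw [Set.mem_Ioi, sub_pos, ← lt_div_iff₀' hm]
    exact ht

theorem kappa_rescaled_limit_finite_second_moment_general
    (ν : Measure ℝ) (hν0 : ν (Set.Iic 0) = 0)
    (hint : Integrable (fun l : ℝ => l) ν)
    (m : ℝ) (hm : m = ∫ l, l ∂ν) (hmpos : 0 < m)
    (hint2 : Integrable (fun l : ℝ => l ^ 2) ν)
    (m2 : ℝ) (hm2 : m2 = ∫ l, l ^ 2 ∂ν)
    (κ : ℝ → ℝ → ℝ)
    (hκ : ∀ t : ℝ, 0 ≤ t → t < 1 / m → ∀ z : ℝ, 0 ≤ z →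
      0 ≤ κ t z ∧ -Psi ν t (κ t z) = z)
    (z : ℝ) (hz : 0 ≤ z) :
    Tendsto (fun t : ℝ => (1 - m * t)⁻¹ * κ t ((1 - m * t) ^ 2 * z))
      (nhdsWithin (1 / m) (Set.Iio (1 / m)))
      (nhds ((m / m2) * (Real.sqrt (1 + 2 * (m2 / m) * z) - 1))) := by
  have hν : ∀ᵐ l ∂ν, 0 ≤ l :=
    ae_iff.2 (measure_mono_null (fun l (hl : ¬0 ≤ l) => (not_le.1 hl).le) hν0)
  have hm2pos : 0 < m2 := hm2 ▸ integral_sq_pos hint2 (hm ▸ hmpos.ne')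
  have ht0 : ∀ᶠ t in 𝓝[<] (1 / m), 0 ≤ t :=
    eventually_nhdsWithin_of_eventually_nhds (eventually_ge_nhds (by positivity))
  have hκeq : ∀ᶠ t in 𝓝[<] (1 / m), 0 ≤ κ t ((1 - m * t) ^ 2 * z) ∧
      (1 - m * t) * κ t ((1 - m * t) ^ 2 * z)
        + t * laplaceRemainder ν (κ t ((1 - m * t) ^ 2 * z)) = (1 - m * t) ^ 2 * z := by
    filter_upwards [ht0, self_mem_nhdsWithin] with t ht0 (ht : t < 1 / m)
    obtain ⟨hκ0, hκPsi⟩ := hκ t ht0 ht ((1 - m * t) ^ 2 * z) (by positivity)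
    rw [neg_Psi_eq hν hint t hκ0, ← hm] at hκPsi
    exact ⟨hκ0, hκPsi⟩
  have hlim := tendsto_inv_mul_of_mul_add_eq_sq_mul laplaceRemainder_zero
    (fun ρ _ => laplaceRemainder_nonneg ρ) (tendsto_laplaceRemainder_div_sq hν hint hint2)
    (tendsto_one_sub_mul_nhdsLT hmpos) (tendsto_id.mono_left nhdsWithin_le_nhds) ht0 hκeq hz
  rwa [← hm2, show 4 * (1 / m * (m2 / 2)) = 2 * (m2 / m) by ring,
    ← inv_mul_sqrt_sub_one_eq (by positivity) hz, inv_div] at hlim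

/-- Let `ν` be a measure on `(0,∞)` with finite positive mean `m` and finite second
moment `m₂`, and for `t ∈ [0,1/m)` let `κ^(t)` be the inverse function of `-Ψ^(t)`
on `[0,∞)`. Then for every `z ≥ 0`,
`lim_{t→(1/m)⁻} (1-mt)⁻¹ κ^(t)((1-mt)² z) = (m/m₂)(√(1 + 2(m₂/m) z) - 1)`. -/
theorem kappa_rescaled_limit_finite_second_moment
    (ν : Measure ℝ) (hν0 : ν (Set.Iic 0) = 0)
    (hint : Integrable (fun l : ℝ => l) ν)
    (m : ℝ) (hm : m = ∫ l, l ∂ν) (hmpos : 0 < m)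
    (hint2 : Integrable (fun l : ℝ => l ^ 2) ν)
    (m2 : ℝ) (hm2 : m2 = ∫ l, l ^ 2 ∂ν)
    (κ : ℝ → ℝ → ℝ)
    (hκ : ∀ t : ℝ, 0 ≤ t → t < 1 / m → ∀ z : ℝ, 0 ≤ z →
      0 ≤ κ t z ∧ -Psi ν t (κ t z) = z)
    (hκ' : ∀ t : ℝ, 0 ≤ t → t < 1 / m → ∀ ρ : ℝ, 0 ≤ ρ →
      κ t (-Psi ν t ρ) = ρ)
    (z : ℝ) (hz : 0 ≤ z) :
    Tendsto (fun t : ℝ => (1 - m * t)⁻¹ * κ t ((1 - m * t) ^ 2 * z))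
      (nhdsWithin (1 / m) (Set.Iio (1 / m)))
      (nhds ((m / m2) * (Real.sqrt (1 + 2 * (m2 / m) * z) - 1))) :=
  kappa_rescaled_limit_finite_second_moment_general ν hν0 hint m hm hmpos hint2 m2 hm2 κ hκ z hz
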